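/- arXiv:1502.03722 — 5 statements merged into one kernel-verified Lean document; each statement's English description precedes it below -/
import Mathlib

section
/- Let E be a measurable space and let ν₀, ν₁ be probability measures on E that are mutually absolutely continuous with finite Kullback–Leibler divergence KL(ν₁‖ν₀). Let Ω = ℕ → E carry the infinite product measures P₀ = ν₀^⊗ℕ and P₁ = ν₁^⊗ℕ and the natural filtration F generated by the coordinate maps. Let τ be a stopping time with respect to F that is finite almost surely under both P₀ and P₁ and has finite expectation under P₁, and let D : Ω → {0,1} be a decision function measurable with respect to the stopped σ-algebra F_τ. If P₀(D = 1) ≤ ε₁ and P₁(D = 0) ≤ ε₂ with ε₁, ε₂ ∈ (0,1) and ε₂ < 1 − ε₁, then E_{P₁}[τ] · KL(ν₁‖ν₀) ≥ d_KL(ε₂ ‖ 1 − ε₁). -/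
open MeasureTheory ProbabilityTheory Filter

/-- The binary Kullback–Leibler divergence (in nats) between `a` and `b`:
`d_KL(a‖b) = a·ln(a/b) + (1−a)·ln((1−a)/(1−b))`. -/
noncomputable def binaryKL (a b : ℝ) : ℝ :=
  a * Real.log (a / b) + (1 - a) * Real.log ((1 - a) / (1 - b))

/-- The natural filtration on the sequence space `ℕ → E`: at time `n`, the σ-algebra
generated by the first `n` coordinate maps `ω ↦ ω i` for `i < n` (so at time `n` the
first `n` observations have been seen; at time `0` nothing has been observed). -/
def coordFiltration (E : Type*) [MeasurableSpace E] :
    Filtration ℕ (inferInstance : MeasurableSpace (ℕ → E)) where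
  seq n := ⨆ i ∈ Set.Iio n, MeasurableSpace.comap (fun ω : ℕ → E => ω i) inferInstance
  mono' := fun n m hnm =>
    biSup_mono fun i (hi : i ∈ Set.Iio n) => lt_of_lt_of_le hi hnm
  le' := fun n => iSup₂_le fun i _ => (measurable_pi_apply i).comap_le

/-! Let `Λ = ∑_{i<τ} log (dν₁/dν₀)(ω i)` be the log-likelihood ratio of the observations made
before stopping. Wald's identity gives `E₁[Λ] = E₁[τ] · KL(ν₁‖ν₀)`. On the other hand, on `F_τ`
the measure `P₁` has density `L = ∏_{i<τ} (dν₁/dν₀)(ω i)` with respect to `P₀`, and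
`L e^{-Λ} ≤ 1`, so `∫_S e^{-Λ} dP₁ ≤ P₀ S` for every `S ∈ F_τ`. Integrating
`log t + 1 - t e^{-Λ} ≤ Λ` over `S` yields `P₁ S (log t + 1) - t P₀ S ≤ ∫_S Λ dP₁`. Adding this
bound for `S = {D = 0}`, `t = ε₂ / (1 - ε₁)` and for its complement, `t = (1 - ε₂) / ε₁`, gives
`d_KL(ε₂ ‖ 1 - ε₁) ≤ E₁[Λ]`. -/

open Finset ENNReal

section CoordFiltration

variable {E : Type*} [MeasurableSpace E]

lemma coordFiltration_le_comap_restrict (n : ℕ) :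
    coordFiltration E n
      ≤ MeasurableSpace.comap (fun ω : ℕ → E => fun i : Fin n => ω i) inferInstance := by
  refine iSup₂_le fun i hi => ?_
  have h : (fun ω : ℕ → E => ω i) = (fun x : Fin n → E => x ⟨i, hi⟩) ∘ fun ω (j : Fin n) => ω j :=
    rfl
  rw [h, ← MeasurableSpace.comap_comp]
  exact MeasurableSpace.comap_mono (measurable_pi_apply _).comap_le

lemma measurable_coord_coordFiltration {i n : ℕ} (h : i < n) :
    Measurable[coordFiltration E n] fun ω : ℕ → E => ω i :=
  Measurable.of_comap_le <| le_biSup (fun j => MeasurableSpace.comap (fun ω : ℕ → E => ω j) _) h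

end CoordFiltration

lemma MeasureTheory.IsStoppingTime.measurableSet_lt_natCast {Ω : Type*} {m : MeasurableSpace Ω}
    {f : Filtration ℕ m} {τ : Ω → ℕ} (hτ : IsStoppingTime f fun ω => (τ ω : WithTop ℕ)) (n : ℕ) :
    MeasurableSet[f n] {ω | n < τ ω} := by
  simpa using hτ.measurableSet_gt n

lemma MeasureTheory.IsStoppingTime.measurable_natCast {Ω : Type*} {m : MeasurableSpace Ω}
    {f : Filtration ℕ m} {τ : Ω → ℕ} (hτ : IsStoppingTime f fun ω => (τ ω : WithTop ℕ)) :
    Measurable τ :=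
  measurable_to_countable' fun k => f.le k _ <| by
    convert hτ.measurableSet_eq k using 1
    ext ω
    simp

lemma MeasureTheory.IsStoppingTime.measurable_stoppedValue_natCast {Ω β : Type*}
    {m : MeasurableSpace Ω} [TopologicalSpace β] [TopologicalSpace.PseudoMetrizableSpace β]
    [SecondCountableTopology β] [MeasurableSpace β] [BorelSpace β] {f : Filtration ℕ m}
    {τ : Ω → ℕ} (hτ : IsStoppingTime f fun ω => (τ ω : WithTop ℕ)) {u : ℕ → Ω → β}
    (hu : ∀ n, Measurable[f n] (u n)) :
    Measurable[hτ.measurableSpace] fun ω => u (τ ω) ω :=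
  measurable_stoppedValue
    (StronglyAdapted.isStronglyProgressive_of_discrete fun n => (hu n).stronglyMeasurable) hτ

section ProductMarginals

variable {E : Type*} [MeasurableSpace E]

lemma measurable_restrict_fin (n : ℕ) : Measurable fun (ω : ℕ → E) (i : Fin n) => ω i :=
  measurable_pi_lambda _ fun _ => measurable_pi_apply _

variable {ν : Measure E} [IsProbabilityMeasure ν] {P : Measure (ℕ → E)}
  (hP : ∀ n : ℕ, P.map (fun ω (i : Fin n) => ω i) = Measure.pi fun _ : Fin n => ν)
include hP

lemma map_coord_prod_restrict_eq_prod (n : ℕ) :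
    P.map (fun ω => (ω n, fun i : Fin n => ω i)) = ν.prod (Measure.pi fun _ : Fin n => ν) := by
  have hsplit : (fun ω : ℕ → E => (ω n, fun i : Fin n => ω i))
      = MeasurableEquiv.piFinSuccAbove (fun _ : Fin (n + 1) => E) (Fin.last n) ∘
          fun ω (i : Fin (n + 1)) => ω i := by
    funext ω
    simp [MeasurableEquiv.piFinSuccAbove_apply, Fin.insertNthEquiv]
    rfl
  rw [hsplit, ← Measure.map_map (MeasurableEquiv.measurable _) (measurable_restrict_fin _),
    hP, (measurePreserving_piFinSuccAbove (fun _ => ν) (Fin.last n)).map_eq]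

lemma map_coord_eq (n : ℕ) :
    P.map (fun ω => ω n) = ν := by
  have h := congrArg (Measure.map Prod.fst) (map_coord_prod_restrict_eq_prod hP n)
  rwa [Measure.map_map measurable_fst ((measurable_pi_apply n).prodMk (measurable_restrict_fin n)),
    Measure.map_fst_prod, measure_univ, one_smul] at h

lemma indep_coordFiltration_coord [IsProbabilityMeasure P] (n : ℕ) :
    Indep (coordFiltration E n) (MeasurableSpace.comap (fun ω => ω n) inferInstance) P := by
  have hindep : IndepFun (fun ω : ℕ → E => ω n) (fun ω (i : Fin n) => ω i) P := by
    rw [indepFun_iff_map_prod_eq_prod_map_map (measurable_pi_apply n).aemeasurable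
      (measurable_restrict_fin n).aemeasurable, hP, map_coord_eq hP]
    exact map_coord_prod_restrict_eq_prod hP n
  exact indep_of_indep_of_le_left ((IndepFun_iff_Indep _ _ _).mp hindep.symm)
    (coordFiltration_le_comap_restrict n)

end ProductMarginals

lemma sum_range_eq_tsum_indicator_lt {Ω M : Type*} [AddCommMonoid M] [TopologicalSpace M]
    (τ : Ω → ℕ) (X : ℕ → Ω → M) (ω : Ω) :
    ∑ i ∈ range (τ ω), X i ω = ∑' n, {ω | n < τ ω}.indicator (X n) ω := by
  rw [sum_eq_tsum_indicator]
  congr 1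
  ext n
  simp [Set.indicator_apply]

lemma lintegral_natCast_eq_tsum_measure_lt {Ω : Type*} [MeasurableSpace Ω] (μ : Measure Ω)
    {τ : Ω → ℕ} (hτ : Measurable τ) :
    ∫⁻ ω, (τ ω : ℝ≥0∞) ∂μ = ∑' n, μ {ω | n < τ ω} := by
  have hset (n : ℕ) : MeasurableSet {ω | n < τ ω} := measurableSet_lt measurable_const hτ
  calc ∫⁻ ω, (τ ω : ℝ≥0∞) ∂μ = ∫⁻ ω, ∑' n, {ω | n < τ ω}.indicator 1 ω ∂μ := by
        simp_rw [← sum_range_eq_tsum_indicator_lt τ (fun _ => 1)]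
        simp
    _ = ∑' n, μ {ω | n < τ ω} := by
        rw [lintegral_tsum fun n => (measurable_one.indicator (hset n)).aemeasurable]
        exact tsum_congr fun n => lintegral_indicator_one (hset n)

section WaldIdentity

variable {E : Type*} [MeasurableSpace E] {ν : Measure E} [IsProbabilityMeasure ν]
  {P : Measure (ℕ → E)} [IsProbabilityMeasure P] {τ : (ℕ → E) → ℕ}

lemma measurable_sum_range_stoppingTime {f : E → ℝ} (hf : Measurable f)
    (hτ : IsStoppingTime (coordFiltration E) fun ω => (τ ω : WithTop ℕ)) :
    Measurable[hτ.measurableSpace] fun ω => ∑ i ∈ range (τ ω), f (ω i) :=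
  hτ.measurable_stoppedValue_natCast fun _ => Finset.measurable_sum _ fun _ hi =>
    hf.comp (measurable_coord_coordFiltration (Finset.mem_range.mp hi))

variable (hP : ∀ n : ℕ, P.map (fun ω (i : Fin n) => ω i) = Measure.pi fun _ : Fin n => ν)
include hP

lemma setLIntegral_coord_eq_mul {n : ℕ} {s : Set (ℕ → E)}
    (hs : MeasurableSet[coordFiltration E n] s) {h : E → ℝ≥0∞} (hh : Measurable h) :
    ∫⁻ ω in s, h (ω n) ∂P = P s * ∫⁻ x, h x ∂ν := by
  have hsm : MeasurableSet s := (coordFiltration E).le n s hs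
  calc ∫⁻ ω in s, h (ω n) ∂P = ∫⁻ ω, s.indicator 1 ω * h (ω n) ∂P := by
        rw [← lintegral_indicator hsm]
        congr 1
        ext ω
        by_cases hω : ω ∈ s <;> simp [hω]
    _ = (∫⁻ ω, s.indicator 1 ω ∂P) * ∫⁻ ω, h (ω n) ∂P :=
        lintegral_mul_eq_lintegral_mul_lintegral_of_independent_measurableSpace
          ((coordFiltration E).le n) (measurable_pi_apply n).comap_le
          (indep_coordFiltration_coord hP n) (measurable_const.indicator hs)
          (hh.comp (Measurable.of_comap_le le_rfl))
    _ = P s * ∫⁻ x, h x ∂ν := by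
        rw [lintegral_indicator_one hsm, ← lintegral_map hh (measurable_pi_apply n),
          map_coord_eq hP]

lemma setIntegral_coord_eq_mul {n : ℕ} {s : Set (ℕ → E)}
    (hs : MeasurableSet[coordFiltration E n] s) {f : E → ℝ} (hf : AEStronglyMeasurable f ν) :
    ∫ ω in s, f (ω n) ∂P = P.real s * ∫ x, f x ∂ν := by
  have hf' : AEStronglyMeasurable f (P.map fun ω => ω n) := by rwa [map_coord_eq hP]
  rw [(indep_coordFiltration_coord hP n).setIntegral_eq_mul ((coordFiltration E).le n)
      (measurable_pi_apply n).aemeasurable hs hf',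
    ← integral_map (measurable_pi_apply n).aemeasurable hf', map_coord_eq hP]

lemma tsum_lintegral_indicator_lt_stoppingTime
    (hτ : IsStoppingTime (coordFiltration E) fun ω => (τ ω : WithTop ℕ))
    {h : E → ℝ≥0∞} (hh : Measurable h) :
    ∑' n, ∫⁻ ω, {ω | n < τ ω}.indicator (fun ω => h (ω n)) ω ∂P
      = (∫⁻ ω, (τ ω : ℝ≥0∞) ∂P) * ∫⁻ x, h x ∂ν := by
  rw [lintegral_natCast_eq_tsum_measure_lt P hτ.measurable_natCast, ← ENNReal.tsum_mul_right]
  refine tsum_congr fun n => ?_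
  rw [lintegral_indicator ((coordFiltration E).le n _ (hτ.measurableSet_lt_natCast n))]
  exact setLIntegral_coord_eq_mul hP (hτ.measurableSet_lt_natCast n) hh

lemma lintegral_sum_range_stoppingTime
    (hτ : IsStoppingTime (coordFiltration E) fun ω => (τ ω : WithTop ℕ))
    {h : E → ℝ≥0∞} (hh : Measurable h) :
    ∫⁻ ω, ∑ i ∈ range (τ ω), h (ω i) ∂P = (∫⁻ ω, (τ ω : ℝ≥0∞) ∂P) * ∫⁻ x, h x ∂ν := by
  simp_rw [sum_range_eq_tsum_indicator_lt τ fun i ω => h (ω i)]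
  refine (lintegral_tsum fun n => ((hh.comp (measurable_pi_apply n)).indicator
      ((coordFiltration E).le n _ (hτ.measurableSet_lt_natCast n))).aemeasurable).trans ?_
  exact tsum_lintegral_indicator_lt_stoppingTime hP hτ hh

lemma integrable_sum_range_stoppingTime
    (hτ : IsStoppingTime (coordFiltration E) fun ω => (τ ω : WithTop ℕ))
    (hτint : Integrable (fun ω => (τ ω : ℝ)) P) {f : E → ℝ} (hf : Measurable f)
    (hfi : Integrable f ν) :
    Integrable (fun ω => ∑ i ∈ range (τ ω), f (ω i)) P := by
  refine ⟨((measurable_sum_range_stoppingTime hf hτ).mono hτ.measurableSpace_le le_rfl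
    ).aestronglyMeasurable, ?_⟩
  calc ∫⁻ ω, ‖∑ i ∈ range (τ ω), f (ω i)‖ₑ ∂P ≤ ∫⁻ ω, ∑ i ∈ range (τ ω), ‖f (ω i)‖ₑ ∂P :=
        lintegral_mono fun ω => enorm_sum_le _ _
    _ = (∫⁻ ω, (τ ω : ℝ≥0∞) ∂P) * ∫⁻ x, ‖f x‖ₑ ∂ν :=
        lintegral_sum_range_stoppingTime hP hτ hf.enorm
    _ < ∞ := ENNReal.mul_lt_top (by simpa [HasFiniteIntegral] using hτint.2) hfi.2

lemma integral_sum_range_stoppingTime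
    (hτ : IsStoppingTime (coordFiltration E) fun ω => (τ ω : WithTop ℕ))
    (hτint : Integrable (fun ω => (τ ω : ℝ)) P) {f : E → ℝ} (hf : Measurable f)
    (hfi : Integrable f ν) :
    ∫ ω, ∑ i ∈ range (τ ω), f (ω i) ∂P = (∫ ω, (τ ω : ℝ) ∂P) * ∫ x, f x ∂ν := by
  have hset (n : ℕ) := hτ.measurableSet_lt_natCast n
  have hsetm (n : ℕ) : MeasurableSet {ω | n < τ ω} := (coordFiltration E).le n _ (hset n)
  have hτ_tsum : ∫ ω, (τ ω : ℝ) ∂P = ∑' n, P.real {ω | n < τ ω} := by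
    calc ∫ ω, (τ ω : ℝ) ∂P = (∫⁻ ω, (τ ω : ℝ≥0∞) ∂P).toReal := by
          simpa using integral_toReal (μ := P) (f := fun ω => (τ ω : ℝ≥0∞))
            (measurable_of_countable _ |>.comp hτ.measurable_natCast).aemeasurable (by simp)
      _ = ∑' n, P.real {ω | n < τ ω} := by
          rw [lintegral_natCast_eq_tsum_measure_lt P hτ.measurable_natCast,
            ENNReal.tsum_toReal_eq fun _ => measure_ne_top _ _]
          rfl
  have hnorm : ∑' n, ∫⁻ ω, ‖{ω | n < τ ω}.indicator (fun ω => f (ω n)) ω‖ₑ ∂P ≠ ∞ := by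
    simp_rw [enorm_indicator_eq_indicator_enorm]
    rw [tsum_lintegral_indicator_lt_stoppingTime hP hτ hf.enorm]
    exact ENNReal.mul_ne_top (by simpa [HasFiniteIntegral] using hτint.2.ne) hfi.2.ne
  simp_rw [sum_range_eq_tsum_indicator_lt τ fun i ω => f (ω i)]
  refine (integral_tsum (fun n => ((hf.comp (measurable_pi_apply n)).indicator
      (hsetm n)).aestronglyMeasurable) hnorm).trans ?_
  rw [hτ_tsum, ← tsum_mul_right]
  refine tsum_congr fun n => ?_
  rw [integral_indicator (hsetm n)]
  exact setIntegral_coord_eq_mul hP (hset n) hfi.1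

end WaldIdentity

lemma pi_eq_withDensity_prod_rnDeriv {E ι : Type*} [MeasurableSpace E] [Fintype ι]
    {μ ν : Measure E} [IsProbabilityMeasure μ] [IsProbabilityMeasure ν] (hac : ν ≪ μ) :
    Measure.pi (fun _ : ι => ν)
      = (Measure.pi fun _ : ι => μ).withDensity fun x => ∏ i, ν.rnDeriv μ (x i) := by
  have hf : Measurable (ν.rnDeriv μ) := Measure.measurable_rnDeriv _ _
  refine Measure.pi_eq fun s hs => ?_
  have hind : (Set.univ.pi s).indicator (fun x => ∏ i, ν.rnDeriv μ (x i))
      = fun x => ∏ i, (s i).indicator (ν.rnDeriv μ) (x i) := by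
    classical
    funext x
    simp only [Set.indicator_apply, Set.mem_univ_pi, Finset.prod_ite_zero, Finset.mem_univ,
      true_implies]
  rw [withDensity_apply _ (MeasurableSet.univ_pi hs), ← lintegral_indicator (.univ_pi hs), hind,
    lintegral_prod_eq_prod_lintegral_of_indepFun _ _
      (iIndepFun_pi fun i => (hf.indicator (hs i)).aemeasurable)
      fun i => (hf.indicator (hs i)).comp (measurable_pi_apply i)]
  refine Finset.prod_congr rfl fun i _ => ?_
  rw [(measurePreserving_eval (fun _ : ι => μ) i).lintegral_comp (hf.indicator (hs i)),
    lintegral_indicator (hs i), Measure.setLIntegral_rnDeriv hac]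

lemma lintegral_eq_lintegral_mul_of_forall_measurableSet {Ω : Type*} {m m₀ : MeasurableSpace Ω}
    (hm : m ≤ m₀) {μ ν : Measure[m₀] Ω} {L : Ω → ℝ≥0∞} (hL : Measurable[m₀] L)
    (h : ∀ s, MeasurableSet[m] s → μ s = ∫⁻ ω in s, L ω ∂ν) {g : Ω → ℝ≥0∞}
    (hg : Measurable[m] g) :
    ∫⁻ ω, g ω ∂μ = ∫⁻ ω, L ω * g ω ∂ν := by
  have htrim : μ.trim hm = (ν.withDensity L).trim hm := by
    refine @Measure.ext _ m _ _ fun s hs => ?_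
    rw [trim_measurableSet_eq hm hs, trim_measurableSet_eq hm hs, h s hs,
      withDensity_apply _ (hm s hs)]
  calc ∫⁻ ω, g ω ∂μ = ∫⁻ ω, g ω ∂(ν.withDensity L) := by
        rw [← lintegral_trim hm hg, htrim, lintegral_trim hm hg]
    _ = ∫⁻ ω, L ω * g ω ∂ν := lintegral_withDensity_eq_lintegral_mul ν hL (hg.mono hm le_rfl)

lemma ENNReal.mul_ofReal_exp_neg_log_toReal_le_one {a : ℝ≥0∞} (ha : a ≠ ∞) :
    a * ENNReal.ofReal (Real.exp (-Real.log a.toReal)) ≤ 1 := by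
  rcases eq_or_ne a 0 with rfl | ha₀
  · simp
  have hpos : 0 < a.toReal := ENNReal.toReal_pos ha₀ ha
  rw [Real.exp_neg, Real.exp_log hpos, ← ENNReal.ofReal_toReal ha, ← ENNReal.ofReal_mul hpos.le,
    ENNReal.toReal_ofReal hpos.le, mul_inv_cancel₀ hpos.ne', ENNReal.ofReal_one]

section LikelihoodRatio

variable {E : Type*} [MeasurableSpace E]

noncomputable def likelihoodRatio (ν₁ ν₀ : Measure E) (n : ℕ) (ω : ℕ → E) : ℝ≥0∞ :=
  ∏ i ∈ range n, ν₁.rnDeriv ν₀ (ω i)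

noncomputable def logLikelihoodRatio (ν₁ ν₀ : Measure E) (n : ℕ) (ω : ℕ → E) : ℝ :=
  ∑ i ∈ range n, llr ν₁ ν₀ (ω i)

lemma likelihoodRatio_mul_exp_neg_logLikelihoodRatio_le_one (ν₁ ν₀ : Measure E) {n : ℕ}
    {ω : ℕ → E} (hω : ∀ i, ν₁.rnDeriv ν₀ (ω i) ≠ ∞) :
    likelihoodRatio ν₁ ν₀ n ω * ENNReal.ofReal (Real.exp (-logLikelihoodRatio ν₁ ν₀ n ω)) ≤ 1 := by
  rw [likelihoodRatio, logLikelihoodRatio, ← Finset.sum_neg_distrib, Real.exp_sum,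
    ENNReal.ofReal_prod_of_nonneg fun _ _ => (Real.exp_pos _).le, ← Finset.prod_mul_distrib]
  exact Finset.prod_le_one' fun i _ => ENNReal.mul_ofReal_exp_neg_log_toReal_le_one (hω i)

lemma measurable_likelihoodRatio_coordFiltration (ν₁ ν₀ : Measure E) (n : ℕ) :
    Measurable[coordFiltration E n] (likelihoodRatio ν₁ ν₀ n) :=
  Finset.measurable_prod _ fun _ hi =>
    (Measure.measurable_rnDeriv _ _).comp
      (measurable_coord_coordFiltration (Finset.mem_range.mp hi))

variable {ν₀ ν₁ : Measure E} [IsProbabilityMeasure ν₀] [IsProbabilityMeasure ν₁]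
  {P₀ P₁ : Measure (ℕ → E)}
  (hP₀ : ∀ n : ℕ, P₀.map (fun ω (i : Fin n) => ω i) = Measure.pi fun _ : Fin n => ν₀)
  (hP₁ : ∀ n : ℕ, P₁.map (fun ω (i : Fin n) => ω i) = Measure.pi fun _ : Fin n => ν₁)
include hP₀ hP₁

lemma measure_eq_setLIntegral_likelihoodRatio (hac : ν₁ ≪ ν₀) {n : ℕ} {s : Set (ℕ → E)}
    (hs : MeasurableSet[coordFiltration E n] s) :
    P₁ s = ∫⁻ ω in s, likelihoodRatio ν₁ ν₀ n ω ∂P₀ := by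
  obtain ⟨B, hB, rfl⟩ := MeasurableSpace.measurableSet_comap.mp
    (coordFiltration_le_comap_restrict n s hs)
  have hF : Measurable fun x : Fin n → E => ∏ i, ν₁.rnDeriv ν₀ (x i) :=
    Finset.measurable_prod _ fun i _ =>
      (Measure.measurable_rnDeriv _ _).comp (measurable_pi_apply i)
  rw [← Measure.map_apply (measurable_restrict_fin n) hB, hP₁, pi_eq_withDensity_prod_rnDeriv hac,
    ← hP₀, withDensity_apply _ hB, setLIntegral_map hB hF (measurable_restrict_fin n)]
  exact setLIntegral_congr_fun ((measurable_restrict_fin n) hB) fun ω _ =>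
    Fin.prod_univ_eq_prod_range (fun i => ν₁.rnDeriv ν₀ (ω i)) n

lemma measure_eq_setLIntegral_likelihoodRatio_stoppingTime (hac : ν₁ ≪ ν₀) {τ : (ℕ → E) → ℕ}
    (hτ : IsStoppingTime (coordFiltration E) fun ω => (τ ω : WithTop ℕ)) {s : Set (ℕ → E)}
    (hs : MeasurableSet[hτ.measurableSpace] s) :
    P₁ s = ∫⁻ ω in s, likelihoodRatio ν₁ ν₀ (τ ω) ω ∂P₀ := by
  have hpiece (n : ℕ) : MeasurableSet[coordFiltration E n] (s ∩ {ω | τ ω = n}) := by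
    simpa using (hτ.measurableSet_inter_eq_iff s n).mp (hs.inter (hτ.measurableSet_eq' n))
  have hpiece' (n : ℕ) : MeasurableSet (s ∩ {ω | τ ω = n}) := (coordFiltration E).le n _ (hpiece n)
  have hdisj : Pairwise (Function.onFun Disjoint fun n => s ∩ {ω | τ ω = n}) :=
    fun m n hmn => Set.disjoint_left.2 fun ω h₁ h₂ => hmn (h₁.2.symm.trans h₂.2)
  have hs_eq : s = ⋃ n, s ∩ {ω | τ ω = n} := by
    ext ω
    simp
  rw [hs_eq, measure_iUnion hdisj hpiece', lintegral_iUnion hpiece' hdisj]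
  refine tsum_congr fun n => ?_
  rw [measure_eq_setLIntegral_likelihoodRatio hP₀ hP₁ hac (hpiece n)]
  exact setLIntegral_congr_fun (hpiece' n) fun ω hω => by rw [hω.2]

lemma setLIntegral_exp_neg_logLikelihoodRatio_le (hac : ν₁ ≪ ν₀) {τ : (ℕ → E) → ℕ}
    (hτ : IsStoppingTime (coordFiltration E) fun ω => (τ ω : WithTop ℕ)) {S : Set (ℕ → E)}
    (hS : MeasurableSet[hτ.measurableSpace] S) :
    ∫⁻ ω in S, ENNReal.ofReal (Real.exp (-logLikelihoodRatio ν₁ ν₀ (τ ω) ω)) ∂P₁ ≤ P₀ S := by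
  have hΛ : Measurable[hτ.measurableSpace] fun ω => logLikelihoodRatio ν₁ ν₀ (τ ω) ω :=
    measurable_sum_range_stoppingTime (measurable_llr _ _) hτ
  have hL : Measurable fun ω => likelihoodRatio ν₁ ν₀ (τ ω) ω :=
    (hτ.measurable_stoppedValue_natCast (measurable_likelihoodRatio_coordFiltration ν₁ ν₀)).mono
      hτ.measurableSpace_le le_rfl
  have hfin : ∀ᵐ ω ∂P₀, ∀ i, ν₁.rnDeriv ν₀ (ω i) ≠ ∞ :=
    ae_all_iff.2 fun i => ae_of_ae_map (measurable_pi_apply i).aemeasurable <| by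
      rw [map_coord_eq hP₀]
      exact (Measure.rnDeriv_lt_top ν₁ ν₀).mono fun _ h => h.ne
  have hSm : MeasurableSet S := hτ.measurableSpace_le S hS
  rw [← lintegral_indicator hSm,
    lintegral_eq_lintegral_mul_of_forall_measurableSet
      (g := S.indicator fun ω => ENNReal.ofReal (Real.exp (-logLikelihoodRatio ν₁ ν₀ (τ ω) ω)))
      hτ.measurableSpace_le hL
      (fun s hs => measure_eq_setLIntegral_likelihoodRatio_stoppingTime hP₀ hP₁ hac hτ hs)
      ((ENNReal.measurable_ofReal.comp (Real.measurable_exp.comp hΛ.neg)).indicator hS),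
    ← lintegral_indicator_one hSm]
  refine lintegral_mono_ae (hfin.mono fun ω hω => ?_)
  by_cases hωS : ω ∈ S
  · simpa [hωS] using likelihoodRatio_mul_exp_neg_logLikelihoodRatio_le_one ν₁ ν₀ hω
  · simp [hωS]

end LikelihoodRatio

lemma measureReal_mul_log_add_one_sub_le_setIntegral {Ω : Type*} [MeasurableSpace Ω]
    {μ : Measure Ω} [IsFiniteMeasure μ] {Λ : Ω → ℝ} (hΛ : Integrable Λ μ) {S : Set Ω}
    (hS : MeasurableSet S) {β : ℝ≥0∞} (hβ : β ≠ ∞)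
    (hexp : ∫⁻ ω in S, ENNReal.ofReal (Real.exp (-Λ ω)) ∂μ ≤ β) {t : ℝ} (ht : 0 < t) :
    μ.real S * (Real.log t + 1) - t * β.toReal ≤ ∫ ω in S, Λ ω ∂μ := by
  have hexp_meas : AEStronglyMeasurable (fun ω => Real.exp (-Λ ω)) (μ.restrict S) :=
    Real.continuous_exp.comp_aestronglyMeasurable hΛ.1.neg.restrict
  have hexp_int : IntegrableOn (fun ω => Real.exp (-Λ ω)) S μ := by
    refine ⟨hexp_meas, ?_⟩
    simp_rw [HasFiniteIntegral, Real.enorm_eq_ofReal (Real.exp_pos _).le]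
    exact hexp.trans_lt hβ.lt_top
  have hexp_le : ∫ ω in S, Real.exp (-Λ ω) ∂μ ≤ β.toReal := by
    rw [integral_eq_lintegral_of_nonneg_ae (ae_of_all _ fun _ => (Real.exp_pos _).le) hexp_meas]
    exact ENNReal.toReal_mono hβ hexp
  have hpt (ω : Ω) : Real.log t + 1 - t * Real.exp (-Λ ω) ≤ Λ ω := by
    have h := Real.add_one_le_exp (Real.log t + -Λ ω)
    rw [Real.exp_add, Real.exp_log ht] at h
    linarith
  calc μ.real S * (Real.log t + 1) - t * β.toReal
      ≤ μ.real S * (Real.log t + 1) - t * ∫ ω in S, Real.exp (-Λ ω) ∂μ := by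
        have := mul_le_mul_of_nonneg_left hexp_le ht.le
        linarith
    _ = ∫ ω in S, (Real.log t + 1 - t * Real.exp (-Λ ω)) ∂μ := by
        rw [integral_sub (integrable_const _) (hexp_int.const_mul t),
          setIntegral_const, integral_const_mul, smul_eq_mul, mul_comm]
    _ ≤ ∫ ω in S, Λ ω ∂μ :=
        setIntegral_mono_on ((integrable_const _).sub (hexp_int.const_mul t)) hΛ.integrableOn hS
          fun ω _ => hpt ω

lemma binaryKL_le_add_of_forall_pos {ε₁ ε₂ a b x y : ℝ} (hε₁ : 0 < ε₁) (hε₂ : 0 < ε₂)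
    (hlt : ε₂ < 1 - ε₁) (ha : a ≤ ε₂) (hb : 1 - ε₁ ≤ b)
    (hx : ∀ t, 0 < t → a * (Real.log t + 1) - t * b ≤ x)
    (hy : ∀ t, 0 < t → (1 - a) * (Real.log t + 1) - t * (1 - b) ≤ y) :
    binaryKL ε₂ (1 - ε₁) ≤ x + y := by
  have h₁ : 0 < 1 - ε₁ := by linarith
  set t₁ := ε₂ / (1 - ε₁) with ht₁
  set t₂ := (1 - ε₂) / ε₁ with ht₂
  have ht₁pos : 0 < t₁ := div_pos hε₂ h₁
  have ht₁₂ : t₁ ≤ t₂ := by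
    rw [ht₁, ht₂, div_le_div_iff₀ h₁ hε₁]
    nlinarith
  have hc₁ : t₁ * (1 - ε₁) = ε₂ := div_mul_cancel₀ _ h₁.ne'
  have hc₂ : t₂ * ε₁ = 1 - ε₂ := div_mul_cancel₀ _ hε₁.ne'
  have hlog : Real.log t₁ ≤ Real.log t₂ := Real.log_le_log ht₁pos ht₁₂
  have hKL : binaryKL ε₂ (1 - ε₁) = ε₂ * Real.log t₁ + (1 - ε₂) * Real.log t₂ := by
    rw [binaryKL, show (1 : ℝ) - (1 - ε₁) = ε₁ by ring]
  -- the bound is affine in `(a, b)` and equals `binaryKL ε₂ (1 - ε₁)` at `(ε₂, 1 - ε₁)`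
  nlinarith [hx t₁ ht₁pos, hy t₂ (ht₁pos.trans_le ht₁₂),
    mul_nonneg (sub_nonneg.2 ha) (sub_nonneg.2 hlog),
    mul_nonneg (sub_nonneg.2 hb) (sub_nonneg.2 ht₁₂)]

theorem wald_expected_sample_size_H1_general
    {E : Type*} [MeasurableSpace E]
    (ν₀ ν₁ : Measure E) [IsProbabilityMeasure ν₀] [IsProbabilityMeasure ν₁]
    (hac₁₀ : ν₁ ≪ ν₀)
    (hKLfin : Integrable (fun x => Real.log (ν₁.rnDeriv ν₀ x).toReal) ν₁)
    (P₀ P₁ : Measure (ℕ → E)) [IsProbabilityMeasure P₀] [IsProbabilityMeasure P₁]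
    (hP₀ : ∀ n : ℕ, P₀.map (fun ω (i : Fin n) => ω i) = Measure.pi fun _ : Fin n => ν₀)
    (hP₁ : ∀ n : ℕ, P₁.map (fun ω (i : Fin n) => ω i) = Measure.pi fun _ : Fin n => ν₁)
    (τ : (ℕ → E) → ℕ)
    (hτ : IsStoppingTime (coordFiltration E) (fun ω => (τ ω : WithTop ℕ)))
    (hτint : Integrable (fun ω => (τ ω : ℝ)) P₁)
    (D : (ℕ → E) → Bool)
    (hD : Measurable[hτ.measurableSpace] D)
    (ε₁ ε₂ : ℝ) (hε₁ : ε₁ ∈ Set.Ioo (0 : ℝ) 1) (hε₂ : ε₂ ∈ Set.Ioo (0 : ℝ) 1)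
    (hlt : ε₂ < 1 - ε₁)
    (hFP : P₀ {ω | D ω = true} ≤ ENNReal.ofReal ε₁)
    (hFN : P₁ {ω | D ω = false} ≤ ENNReal.ofReal ε₂) :
    (∫ ω, (τ ω : ℝ) ∂P₁) * (∫ x, Real.log (ν₁.rnDeriv ν₀ x).toReal ∂ν₁)
      ≥ binaryKL ε₂ (1 - ε₁) := by
  set A := {ω | D ω = false}
  have hA : MeasurableSet[hτ.measurableSpace] A := hD (measurableSet_singleton false)
  have hAm : MeasurableSet A := hτ.measurableSpace_le A hA
  have hAc : Aᶜ = {ω | D ω = true} := by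
    ext ω
    simp [A]
  have hΛ : Integrable (fun ω => logLikelihoodRatio ν₁ ν₀ (τ ω) ω) P₁ :=
    integrable_sum_range_stoppingTime hP₁ hτ hτint (measurable_llr _ _) hKLfin
  have hWald : ∫ ω, logLikelihoodRatio ν₁ ν₀ (τ ω) ω ∂P₁
      = (∫ ω, (τ ω : ℝ) ∂P₁) * ∫ x, llr ν₁ ν₀ x ∂ν₁ :=
    integral_sum_range_stoppingTime hP₁ hτ hτint (measurable_llr _ _) hKLfin
  have hbound {S : Set (ℕ → E)} (hS : MeasurableSet[hτ.measurableSpace] S) (t : ℝ) (ht : 0 < t) :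
      P₁.real S * (Real.log t + 1) - t * P₀.real S
        ≤ ∫ ω in S, logLikelihoodRatio ν₁ ν₀ (τ ω) ω ∂P₁ :=
    measureReal_mul_log_add_one_sub_le_setIntegral hΛ (hτ.measurableSpace_le S hS)
      (measure_ne_top _ _) (setLIntegral_exp_neg_logLikelihoodRatio_le hP₀ hP₁ hac₁₀ hτ hS) ht
  rw [ge_iff_le, show (fun x => Real.log (ν₁.rnDeriv ν₀ x).toReal) = llr ν₁ ν₀ from rfl, ← hWald,
    ← integral_add_compl hAm hΛ]
  refine binaryKL_le_add_of_forall_pos (a := P₁.real A) (b := P₀.real A) hε₁.1 hε₂.1 hlt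
    (ENNReal.toReal_le_of_le_ofReal hε₂.1.le hFN) ?_ (hbound hA) fun t ht => ?_
  · have hFP' : P₀.real Aᶜ ≤ ε₁ := by
      rw [hAc]
      exact ENNReal.toReal_le_of_le_ofReal hε₁.1.le hFP
    rw [probReal_compl_eq_one_sub hAm] at hFP'
    linarith
  · simpa only [probReal_compl_eq_one_sub hAm] using hbound hA.compl t ht

/-- **Wald's lower bound on the expected sample size, `H₁` side.**
Let `ν₀, ν₁` be mutually absolutely continuous probability measures on `E` with finite
Kullback–Leibler divergence `KL(ν₁‖ν₀) = ∫ ln(dν₁/dν₀) dν₁`.  Let `P₀` and `P₁` be the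
infinite product measures `ν₀^⊗ℕ` and `ν₁^⊗ℕ` on `Ω = ℕ → E` (characterized by their
finite-dimensional marginals), let `τ` be a stopping time for the natural coordinate
filtration which is (everywhere) finite and `P₁`-integrable, and let `D` be a decision
function measurable with respect to the stopped σ-algebra `F_τ`.  If the false positive
probability `P₀(D = 1)` is at most `ε₁` and the false negative probability `P₁(D = 0)`
is at most `ε₂`, with `ε₁, ε₂ ∈ (0,1)` and `ε₂ < 1 − ε₁`, then
`E_{P₁}[τ] · KL(ν₁‖ν₀) ≥ d_KL(ε₂ ‖ 1 − ε₁)`. -/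
theorem wald_expected_sample_size_H1
    {E : Type*} [MeasurableSpace E]
    (ν₀ ν₁ : Measure E) [IsProbabilityMeasure ν₀] [IsProbabilityMeasure ν₁]
    (hac₀₁ : ν₀ ≪ ν₁) (hac₁₀ : ν₁ ≪ ν₀)
    (hKLfin : Integrable (fun x => Real.log (ν₁.rnDeriv ν₀ x).toReal) ν₁)
    (P₀ P₁ : Measure (ℕ → E)) [IsProbabilityMeasure P₀] [IsProbabilityMeasure P₁]
    (hP₀ : ∀ n : ℕ, P₀.map (fun ω (i : Fin n) => ω i) = Measure.pi fun _ : Fin n => ν₀)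
    (hP₁ : ∀ n : ℕ, P₁.map (fun ω (i : Fin n) => ω i) = Measure.pi fun _ : Fin n => ν₁)
    (τ : (ℕ → E) → ℕ)
    (hτ : IsStoppingTime (coordFiltration E) (fun ω => (τ ω : WithTop ℕ)))
    (hτint : Integrable (fun ω => (τ ω : ℝ)) P₁)
    (D : (ℕ → E) → Bool)
    (hD : Measurable[hτ.measurableSpace] D)
    (ε₁ ε₂ : ℝ) (hε₁ : ε₁ ∈ Set.Ioo (0 : ℝ) 1) (hε₂ : ε₂ ∈ Set.Ioo (0 : ℝ) 1)
    (hlt : ε₂ < 1 - ε₁)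
    (hFP : P₀ {ω | D ω = true} ≤ ENNReal.ofReal ε₁)
    (hFN : P₁ {ω | D ω = false} ≤ ENNReal.ofReal ε₂) :
    (∫ ω, (τ ω : ℝ) ∂P₁) * (∫ x, Real.log (ν₁.rnDeriv ν₀ x).toReal ∂ν₁)
      ≥ binaryKL ε₂ (1 - ε₁) :=
  wald_expected_sample_size_H1_general ν₀ ν₁ hac₁₀ hKLfin P₀ P₁ hP₀ hP₁ τ hτ hτint D hD ε₁ ε₂ hε₁
    hε₂ hlt hFP hFN
end

section
/- For a real parameter c > 1, define μ₀(c) = ∫₀¹ (1/(π√(p(1−p)))) · [ p²·ln(1 + (1−p)/(c·p)) + 2p(1−p)·ln(1 − 1/c) + (1−p)²·ln(1 + p/(c·(1−p))) ] dp. Then lim_{c→∞} c²·μ₀(c) = −1/2. -/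
open Filter MeasureTheory intervalIntegral

/-- The expected per-segment score `μ₀(c)` of an innocent user under the arcsine bias
distribution, the interleaving attack by `c` colluders, and the interleaving
log-likelihood decoder. -/
noncomputable def mu0 (c : ℝ) : ℝ :=
  ∫ p in (0:ℝ)..1, (1 / (Real.pi * Real.sqrt (p * (1 - p)))) *
    (p ^ 2 * Real.log (1 + (1 - p) / (c * p))
      + 2 * p * (1 - p) * Real.log (1 - 1 / c)
      + (1 - p) ^ 2 * Real.log (1 + p / (c * (1 - p))))

/-!
Write the integrand as `arcsineDensity p * innocentScore c p`. In `innocentScore c p` the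
first-order terms of the three logarithms cancel, so it is a combination, with weights
`p²`, `2p(1-p)`, `(1-p)²`, of the remainders `log (1 + x) - x` at `x = a / c`. Since
`log (1 + x) - x = -x²/2 + O(x³)` and the weighted sum of the `a²` is `(p + (1 - p))² = 1`,
`c² · innocentScore c p → -1/2` for each `p`, while `|log (1 + x) - x| ≤ 2x²` for
`x ≥ -1/2` gives `|c² · innocentScore c p| ≤ 2`. Dominated convergence against the arcsine
density, a probability density with primitive `arcsin (2p - 1) / π`, concludes.
-/

open Real Set
open scoped Topology

noncomputable def arcsineDensity (p : ℝ) : ℝ := 1 / (π * √(p * (1 - p)))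

lemma arcsineDensity_nonneg (p : ℝ) : 0 ≤ arcsineDensity p := by
  unfold arcsineDensity; have := pi_pos; positivity

lemma hasDerivAt_arcsin_two_mul_sub_one_div_pi {p : ℝ} (hp : p ∈ Ioo (0 : ℝ) 1) :
    HasDerivAt (fun q => arcsin (2 * q - 1) / π) (arcsineDensity p) p := by
  obtain ⟨hp0, hp1⟩ := hp
  have h := ((hasDerivAt_arcsin (x := 2 * p - 1) (by linarith) (by linarith)).comp p
    (((hasDerivAt_id p).const_mul 2).sub_const 1)).div_const π
  refine h.congr_deriv ?_
  have hsq : √(1 - (2 * p - 1) ^ 2) = 2 * √(p * (1 - p)) := by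
    rw [show 1 - (2 * p - 1) ^ 2 = 2 ^ 2 * (p * (1 - p)) by ring, sqrt_mul (by norm_num),
      sqrt_sq (by norm_num)]
  have : 0 < √(p * (1 - p)) := sqrt_pos.2 (mul_pos hp0 (by linarith))
  rw [arcsineDensity, hsq]
  field_simp

lemma continuousOn_arcsin_two_mul_sub_one_div_pi :
    ContinuousOn (fun q => arcsin (2 * q - 1) / π) (Icc 0 1) := by
  fun_prop

lemma integrableOn_arcsineDensity : IntegrableOn arcsineDensity (Ioc 0 1) :=
  integrableOn_deriv_of_nonneg continuousOn_arcsin_two_mul_sub_one_div_pi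
    (fun _ hp => hasDerivAt_arcsin_two_mul_sub_one_div_pi hp) (fun p _ => arcsineDensity_nonneg p)

lemma integral_arcsineDensity : ∫ p in (0 : ℝ)..1, arcsineDensity p = 1 := by
  rw [integral_eq_sub_of_hasDerivAt_of_le zero_le_one continuousOn_arcsin_two_mul_sub_one_div_pi
    (fun _ hp => hasDerivAt_arcsin_two_mul_sub_one_div_pi hp)
    ((intervalIntegrable_iff_integrableOn_Ioc_of_le zero_le_one).2 integrableOn_arcsineDensity)]
  have := pi_pos
  norm_num
  field_simp
  ring

lemma abs_log_one_add_sub_self_le {x : ℝ} (hx : -(1 / 2) ≤ x) :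
    |log (1 + x) - x| ≤ 2 * x ^ 2 := by
  have hx1 : 0 < 1 + x := by linarith
  have upper := log_le_sub_one_of_pos hx1
  have lower := one_sub_inv_le_log_of_pos hx1
  have hinv : 1 - (1 + x)⁻¹ - x = -(x ^ 2 / (1 + x)) := by field_simp; ring
  have hquot : x ^ 2 / (1 + x) ≤ 2 * x ^ 2 := by
    rw [div_le_iff₀ hx1]; nlinarith [sq_nonneg x]
  rw [abs_le]; constructor <;> linarith

lemma abs_log_one_add_sub_self_add_sq_div_two_le {x : ℝ} (hx : |x| < 1) :
    |log (1 + x) - x + x ^ 2 / 2| ≤ |x| ^ 3 / (1 - |x|) := by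
  have h := abs_log_sub_add_sum_range_le (x := -x) (by rwa [abs_neg]) 2
  simp only [Finset.sum_range_succ, Finset.sum_range_zero, abs_neg, sub_neg_eq_add] at h
  convert h using 2
  push_cast
  ring

lemma tendsto_sq_mul_log_one_add_div_sub_div (a : ℝ) :
    Tendsto (fun c : ℝ => c ^ 2 * (log (1 + a / c) - a / c)) atTop (𝓝 (-(a ^ 2 / 2))) := by
  rw [← tendsto_sub_nhds_zero_iff]
  have hbound : Tendsto (fun c : ℝ => |a| ^ 3 / (c - |a|)) atTop (𝓝 0) :=
    tendsto_const_nhds.div_atTop (tendsto_atTop_add_const_right _ _ tendsto_id)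
  refine squeeze_zero_norm' ?_ hbound
  filter_upwards [eventually_gt_atTop (|a| + 1)] with c hc
  have hc0 : 0 < c := by linarith [abs_nonneg a]
  have hac : |a / c| = |a| / c := by rw [abs_div, abs_of_pos hc0]
  have hsmall : |a / c| < 1 := by rw [hac, div_lt_one hc0]; linarith
  calc ‖c ^ 2 * (log (1 + a / c) - a / c) - -(a ^ 2 / 2)‖
      = c ^ 2 * |log (1 + a / c) - a / c + (a / c) ^ 2 / 2| := by
        rw [norm_eq_abs, ← abs_of_pos (pow_pos hc0 2), ← abs_mul, abs_of_pos (pow_pos hc0 2)]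
        congr 1; field_simp; ring
    _ ≤ c ^ 2 * (|a / c| ^ 3 / (1 - |a / c|)) :=
        mul_le_mul_of_nonneg_left (abs_log_one_add_sub_self_add_sq_div_two_le hsmall)
          (by positivity)
    _ = |a| ^ 3 / (c - |a|) := by
        have : 0 < c - |a| := by linarith
        rw [hac]; field_simp

noncomputable def innocentScore (c p : ℝ) : ℝ :=
  p ^ 2 * log (1 + (1 - p) / (c * p)) + 2 * p * (1 - p) * log (1 - 1 / c)
    + (1 - p) ^ 2 * log (1 + p / (c * (1 - p)))

lemma innocentScore_eq_weighted_log_remainders {c p : ℝ} (hc : c ≠ 0)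
    (hp : p ∈ Ioo (0 : ℝ) 1) :
    innocentScore c p =
      p ^ 2 * (log (1 + (1 - p) / p / c) - (1 - p) / p / c)
        + 2 * p * (1 - p) * (log (1 + -1 / c) - -1 / c)
        + (1 - p) ^ 2 * (log (1 + p / (1 - p) / c) - p / (1 - p) / c) := by
  have hp0 : p ≠ 0 := hp.1.ne'
  have hp1 : 1 - p ≠ 0 := (sub_pos.2 hp.2).ne'
  rw [innocentScore, div_div, div_div, mul_comm p c, mul_comm (1 - p) c, neg_div,
    ← sub_eq_add_neg]
  field_simp
  ring

lemma abs_innocentScore_le {c p : ℝ} (hc : 2 ≤ c) (hp : p ∈ Ioo (0 : ℝ) 1) :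
    |innocentScore c p| ≤ 2 / c ^ 2 := by
  have hc0 : 0 < c := by linarith
  have hq : 0 < 1 - p := sub_pos.2 hp.2
  have hw : 0 ≤ 2 * p * (1 - p) := mul_nonneg (by linarith [hp.1]) hq.le
  have h1 := abs_log_one_add_sub_self_le (x := (1 - p) / p / c) (by
    have : 0 ≤ (1 - p) / p / c := div_nonneg (div_nonneg hq.le hp.1.le) hc0.le
    linarith)
  have h2 := abs_log_one_add_sub_self_le (x := -1 / c) (by
    rw [neg_div, neg_le_neg_iff, div_le_div_iff₀ hc0 two_pos]; linarith)
  have h3 := abs_log_one_add_sub_self_le (x := p / (1 - p) / c) (by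
    have : 0 ≤ p / (1 - p) / c := div_nonneg (div_nonneg hp.1.le hq.le) hc0.le
    linarith)
  rw [innocentScore_eq_weighted_log_remainders hc0.ne' hp]
  calc _ ≤ p ^ 2 * (2 * ((1 - p) / p / c) ^ 2) + 2 * p * (1 - p) * (2 * (-1 / c) ^ 2)
        + (1 - p) ^ 2 * (2 * (p / (1 - p) / c) ^ 2) := by
        refine (abs_add_le _ _).trans (add_le_add ((abs_add_le _ _).trans (add_le_add ?_ ?_)) ?_)
          <;> rw [abs_mul, abs_of_nonneg (by positivity)]
          <;> gcongr
    _ = 2 / c ^ 2 := by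
        have := hp.1.ne'
        field_simp
        ring

lemma tendsto_sq_mul_innocentScore {p : ℝ} (hp : p ∈ Ioo (0 : ℝ) 1) :
    Tendsto (fun c => c ^ 2 * innocentScore c p) atTop (𝓝 (-(1 / 2))) := by
  have hp0 : p ≠ 0 := hp.1.ne'
  have hp1 : 1 - p ≠ 0 := (sub_pos.2 hp.2).ne'
  have h := (((tendsto_sq_mul_log_one_add_div_sub_div ((1 - p) / p)).const_mul (p ^ 2)).add
    ((tendsto_sq_mul_log_one_add_div_sub_div (-1)).const_mul (2 * p * (1 - p)))).add
    ((tendsto_sq_mul_log_one_add_div_sub_div (p / (1 - p))).const_mul ((1 - p) ^ 2))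
  have hlim : p ^ 2 * -(((1 - p) / p) ^ 2 / 2) + 2 * p * (1 - p) * -((-1) ^ 2 / 2)
      + (1 - p) ^ 2 * -((p / (1 - p)) ^ 2 / 2) = -(1 / 2 : ℝ) := by
    field_simp
    ring
  rw [hlim] at h
  refine h.congr' ?_
  filter_upwards [eventually_ne_atTop 0] with c hc
  rw [innocentScore_eq_weighted_log_remainders hc hp]
  ring

lemma sq_mul_mu0_eq (c : ℝ) :
    c ^ 2 * mu0 c = ∫ p in Ioo 0 1, arcsineDensity p * (c ^ 2 * innocentScore c p) := by
  rw [mu0, integral_of_le zero_le_one, integral_Ioc_eq_integral_Ioo,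
    ← MeasureTheory.integral_const_mul]
  exact integral_congr_ae (ae_of_all _ fun p => mul_left_comm _ _ _)

lemma measurable_innocentScore (c : ℝ) : Measurable (innocentScore c) := by
  unfold innocentScore; fun_prop

lemma measurable_arcsineDensity : Measurable arcsineDensity := by
  unfold arcsineDensity; fun_prop

/-- The expected per-segment innocent score under the interleaving log-likelihood decoder
satisfies `μ₀(c) ∼ −1/(2c²)`, i.e. `c²·μ₀(c) → −1/2` as `c → ∞`. -/
theorem mu0_asymptotics :
    Tendsto (fun c : ℝ => c ^ 2 * mu0 c) atTop (nhds (-(1 / 2))) := by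
  have hdom := tendsto_integral_filter_of_dominated_convergence (l := atTop)
    (μ := volume.restrict (Ioo (0 : ℝ) 1))
    (F := fun c p => arcsineDensity p * (c ^ 2 * innocentScore c p))
    (f := fun p => arcsineDensity p * (-(1 / 2))) (fun p => arcsineDensity p * 2)
    (.of_forall fun c => (measurable_arcsineDensity.mul
      ((measurable_innocentScore c).const_mul _)).aestronglyMeasurable)
    ?_ ((integrableOn_arcsineDensity.mono_set Ioo_subset_Ioc_self).mul_const 2)
    ((ae_restrict_iff' measurableSet_Ioo).2 (.of_forall fun p hp =>
      (tendsto_sq_mul_innocentScore hp).const_mul _))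
  · rw [MeasureTheory.integral_mul_const, ← integral_Ioc_eq_integral_Ioo,
      ← integral_of_le zero_le_one, integral_arcsineDensity, one_mul] at hdom
    simpa only [sq_mul_mu0_eq] using hdom
  · filter_upwards [eventually_ge_atTop 2] with c hc
    refine (ae_restrict_iff' measurableSet_Ioo).2 (.of_forall fun p hp => ?_)
    have hc2 : 0 < c ^ 2 := by positivity
    rw [norm_mul, norm_mul, norm_of_nonneg (arcsineDensity_nonneg p), norm_of_nonneg hc2.le]
    refine mul_le_mul_of_nonneg_left ?_ (arcsineDensity_nonneg p)
    rw [norm_eq_abs, ← le_div_iff₀' hc2]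
    exact abs_innocentScore_le hc hp
end

section
/- For a real parameter c > 1, define μ₀(c) = ∫₀¹ (1/(π√(p(1−p)))) · [ p²·ln(1 + (1−p)/(c·p)) + 2p(1−p)·ln(1 − 1/c) + (1−p)²·ln(1 + p/(c·(1−p))) ] dp and μ₁(c) = ∫₀¹ (1/(π√(p(1−p)))) · [ p²·(1 + (1−p)/(c·p))·ln(1 + (1−p)/(c·p)) + 2p(1−p)·(1 − 1/c)·ln(1 − 1/c) + (1−p)²·(1 + p/(c·(1−p)))·ln(1 + p/(c·(1−p))) ] dp. Then μ₁(c) − μ₀(c) = (1/(π·c)) · ∫₀¹ √(p(1−p)) · ln(1 + c/((c−1)²·p·(1−p))) dp. -/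
open Filter MeasureTheory intervalIntegral

/-- The expected per-segment score `μ₁(c)` of a guilty user under the arcsine bias
distribution, the interleaving attack by `c` colluders, and the interleaving
log-likelihood decoder. -/
noncomputable def mu1 (c : ℝ) : ℝ :=
  ∫ p in (0:ℝ)..1, (1 / (Real.pi * Real.sqrt (p * (1 - p)))) *
    (p ^ 2 * (1 + (1 - p) / (c * p)) * Real.log (1 + (1 - p) / (c * p))
      + 2 * p * (1 - p) * (1 - 1 / c) * Real.log (1 - 1 / c)
      + (1 - p) ^ 2 * (1 + p / (c * (1 - p))) * Real.log (1 + p / (c * (1 - p))))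

/-- Innocent-score integrand, as a named function. -/
noncomputable def F0aux (c p : ℝ) : ℝ :=
  (1 / (Real.pi * Real.sqrt (p * (1 - p)))) *
    (p ^ 2 * Real.log (1 + (1 - p) / (c * p))
      + 2 * p * (1 - p) * Real.log (1 - 1 / c)
      + (1 - p) ^ 2 * Real.log (1 + p / (c * (1 - p))))

/-- Guilty-score integrand, as a named function. -/
noncomputable def F1aux (c p : ℝ) : ℝ :=
  (1 / (Real.pi * Real.sqrt (p * (1 - p)))) *
    (p ^ 2 * (1 + (1 - p) / (c * p)) * Real.log (1 + (1 - p) / (c * p))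
      + 2 * p * (1 - p) * (1 - 1 / c) * Real.log (1 - 1 / c)
      + (1 - p) ^ 2 * (1 + p / (c * (1 - p))) * Real.log (1 + p / (c * (1 - p))))

/-- The integrand of the right-hand side. -/
noncomputable def Gaux (c p : ℝ) : ℝ :=
  Real.sqrt (p * (1 - p)) * Real.log (1 + c / ((c - 1) ^ 2 * p * (1 - p)))

lemma log_one_add_le_two_sqrt {x : ℝ} (hx : 0 ≤ x) :
    Real.log (1 + x) ≤ 2 * Real.sqrt x := by
  have hs := Real.sqrt_nonneg x
  have hsq := Real.sq_sqrt hx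
  have h1 : (1:ℝ) + x ≤ (1 + Real.sqrt x) ^ 2 := by nlinarith
  calc Real.log (1 + x) ≤ Real.log ((1 + Real.sqrt x) ^ 2) :=
        Real.log_le_log (by positivity) h1
    _ = 2 * Real.log (1 + Real.sqrt x) := by
        rw [Real.log_pow]; push_cast; ring
    _ ≤ 2 * Real.sqrt x := by
        have := Real.log_le_sub_one_of_pos (show (0:ℝ) < 1 + Real.sqrt x by positivity)
        linarith

lemma F1_eq_F0_add (c : ℝ) (hc : 1 < c) :
    Set.EqOn (F1aux c)
      (fun p => F0aux c p + (1 / (Real.pi * c)) * Gaux c p) (Set.uIcc 0 1) := by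
  intro p hp
  rw [Set.uIcc_of_le (by norm_num : (0:ℝ) ≤ 1)] at hp
  obtain ⟨hp0, hp1⟩ := hp
  rcases eq_or_lt_of_le hp0 with h0 | h0
  · simp [F0aux, F1aux, Gaux, ← h0]
  rcases eq_or_lt_of_le hp1 with h1 | h1
  · norm_num [F0aux, F1aux, Gaux, h1]
  · have hp' : 0 < p := h0
    have h1p : 0 < 1 - p := by linarith
    have hu : 0 < p * (1 - p) := by positivity
    have hcp : 0 < c := by linarith
    have hc1 : 0 < c - 1 := by linarith
    have hπ : (0:ℝ) < Real.pi := Real.pi_pos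
    set S := Real.sqrt (p * (1 - p)) with hSdef
    have hS : S * S = p * (1 - p) := Real.mul_self_sqrt hu.le
    have hSpos : 0 < S := Real.sqrt_pos.mpr hu
    set L1 := Real.log (1 + (1 - p) / (c * p)) with hL1
    set L2 := Real.log (1 - 1 / c) with hL2
    set L3 := Real.log (1 + p / (c * (1 - p))) with hL3
    have hA : (0:ℝ) < 1 + (1 - p) / (c * p) := by positivity
    have hB : (0:ℝ) < 1 + p / (c * (1 - p)) := by positivity
    have hC : (0:ℝ) < 1 - 1 / c := by
      rw [sub_pos, div_lt_one hcp]; linarith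
    have hlog : Real.log (1 + c / ((c - 1) ^ 2 * p * (1 - p))) = L1 + L3 - 2 * L2 := by
      have harg : (1:ℝ) + c / ((c - 1) ^ 2 * p * (1 - p)) =
          ((1 + (1 - p) / (c * p)) * (1 + p / (c * (1 - p)))) / ((1 - 1 / c) ^ 2) := by
        field_simp
        ring
      rw [harg, Real.log_div (by positivity) (by positivity),
        Real.log_mul hA.ne' hB.ne', Real.log_pow, hL1, hL2, hL3]
      push_cast; ring
    show F1aux c p = F0aux c p + 1 / (Real.pi * c) * Gaux c p
    unfold F1aux F0aux Gaux
    rw [hlog, ← hSdef, ← hL1, ← hL2, ← hL3]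
    have key2 : p ^ 2 * (1 + (1 - p) / (c * p)) * L1 + 2 * p * (1 - p) * (1 - 1 / c) * L2
        + (1 - p) ^ 2 * (1 + p / (c * (1 - p))) * L3
        = (p ^ 2 * L1 + 2 * p * (1 - p) * L2 + (1 - p) ^ 2 * L3)
          + ((S * S) / c) * (L1 + L3 - 2 * L2) := by
      rw [hS]; field_simp; ring
    rw [key2]
    field_simp

lemma Gaux_integrable (c : ℝ) (hc : 1 < c) :
    IntervalIntegrable (Gaux c) MeasureTheory.volume 0 1 := by
  have hc1 : 0 < c - 1 := by linarith
  have hcp : 0 < c := by linarith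
  set K := c / (c - 1) ^ 2 with hK
  have hK0 : 0 < K := by positivity
  have hmeas : Measurable (Gaux c) := by
    unfold Gaux
    exact (measurable_id.mul (measurable_const.sub measurable_id)).sqrt.mul
      (measurable_const.add (measurable_const.div
        (((measurable_const.mul measurable_id).mul (measurable_const.sub measurable_id))))).log
  apply IntervalIntegrable.mono_fun' (g := fun _ => 2 * Real.sqrt K)
    intervalIntegrable_const hmeas.aestronglyMeasurable
  rw [Set.uIoc_of_le (by norm_num : (0:ℝ) ≤ 1)]
  filter_upwards [MeasureTheory.ae_restrict_mem measurableSet_Ioc] with p hp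
  obtain ⟨hp0, hp1⟩ := hp
  rcases eq_or_lt_of_le hp1 with h1 | h1
  · rw [h1]
    have h0 : Gaux c 1 = 0 := by norm_num [Gaux]
    rw [h0, norm_zero]
    positivity
  · have h1p : 0 < 1 - p := by linarith
    have hu : 0 < p * (1 - p) := by positivity
    have hspos : 0 < Real.sqrt (p * (1 - p)) := Real.sqrt_pos.mpr hu
    have harg : c / ((c - 1) ^ 2 * p * (1 - p)) = K / (p * (1 - p)) := by
      rw [hK, div_div, mul_assoc]
    have hlognn : 0 ≤ Real.log (1 + c / ((c - 1) ^ 2 * p * (1 - p))) := by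
      apply Real.log_nonneg
      have : 0 ≤ c / ((c - 1) ^ 2 * p * (1 - p)) := by positivity
      linarith
    have hGnn : 0 ≤ Gaux c p := mul_nonneg (Real.sqrt_nonneg _) hlognn
    rw [Real.norm_eq_abs, abs_of_nonneg hGnn]
    unfold Gaux
    rw [harg]
    have hb := log_one_add_le_two_sqrt (x := K / (p * (1 - p))) (by positivity)
    calc Real.sqrt (p * (1 - p)) * Real.log (1 + K / (p * (1 - p)))
        ≤ Real.sqrt (p * (1 - p)) * (2 * Real.sqrt (K / (p * (1 - p)))) :=
          mul_le_mul_of_nonneg_left hb hspos.le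
      _ = 2 * Real.sqrt K := by
          rw [Real.sqrt_div hK0.le]
          field_simp

set_option maxHeartbeats 1000000 in
lemma F0aux_integrable (c : ℝ) (hc : 1 < c) :
    IntervalIntegrable (F0aux c) MeasureTheory.volume 0 1 := by
  have hcp : 0 < c := by linarith
  have hπ : (0:ℝ) < Real.pi := Real.pi_pos
  set L : ℝ := |Real.log (1 - 1 / c)| with hL
  set C : ℝ := (2 + 2 * L) / Real.pi with hC
  have hLnn : 0 ≤ L := abs_nonneg _
  have hCnn : 0 ≤ C := by positivity
  have hmeas : Measurable (F0aux c) := by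
    unfold F0aux
    have m1 : Measurable fun p : ℝ => 1 / (Real.pi * Real.sqrt (p * (1 - p))) :=
      measurable_const.div
        (measurable_const.mul (measurable_id.mul (measurable_const.sub measurable_id)).sqrt)
    have m2 : Measurable fun p : ℝ => Real.log (1 + (1 - p) / (c * p)) :=
      (measurable_const.add ((measurable_const.sub measurable_id).div
        (measurable_const.mul measurable_id))).log
    have m3 : Measurable fun p : ℝ => Real.log (1 + p / (c * (1 - p))) :=
      (measurable_const.add (measurable_id.div
        (measurable_const.mul (measurable_const.sub measurable_id)))).log
    exact m1.mul ((((measurable_id.pow_const 2).mul m2).add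
      ((((measurable_const.mul measurable_id).mul (measurable_const.sub measurable_id)).mul
        measurable_const))).add (((measurable_const.sub measurable_id).pow_const 2).mul m3))
  have hB : IntervalIntegrable
      (fun p => C * Real.sqrt 2 * (p ^ (-(1/2) : ℝ) + (1 - p) ^ (-(1/2) : ℝ)))
      MeasureTheory.volume 0 1 := by
    apply IntervalIntegrable.const_mul
    apply IntervalIntegrable.add
    · exact intervalIntegrable_rpow' (by norm_num)
    · have h := (intervalIntegrable_rpow' (r := -(1/2)) (by norm_num)
        (a := (0:ℝ)) (b := (1:ℝ))).comp_sub_left 1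
      norm_num at h
      exact h.symm
  apply IntervalIntegrable.mono_fun' hB hmeas.aestronglyMeasurable
  rw [Set.uIoc_of_le (by norm_num : (0:ℝ) ≤ 1)]
  filter_upwards [MeasureTheory.ae_restrict_mem measurableSet_Ioc] with p hp
  obtain ⟨hp0, hp1⟩ := hp
  rcases eq_or_lt_of_le hp1 with h1 | h1
  · rw [show p = 1 from h1]
    have h0 : F0aux c 1 = 0 := by norm_num [F0aux]
    rw [h0, norm_zero]
    exact mul_nonneg (mul_nonneg hCnn (Real.sqrt_nonneg 2))
      (add_nonneg (Real.rpow_nonneg (by norm_num) _) (Real.rpow_nonneg (by norm_num) _))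
  · have h1p : 0 < 1 - p := by linarith
    have hu : 0 < p * (1 - p) := by positivity
    have hspos : 0 < Real.sqrt (p * (1 - p)) := Real.sqrt_pos.mpr hu
    have hsp : 0 < Real.sqrt p := Real.sqrt_pos.mpr hp0
    have hs1p : 0 < Real.sqrt (1 - p) := Real.sqrt_pos.mpr h1p
    set A1 := Real.log (1 + (1 - p) / (c * p)) with hA1
    set A2 := Real.log (1 - 1 / c) with hA2
    set A3 := Real.log (1 + p / (c * (1 - p))) with hA3
    have hA1nn : 0 ≤ A1 := by
      apply Real.log_nonneg
      have : 0 ≤ (1 - p) / (c * p) := by positivity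
      linarith
    have hA3nn : 0 ≤ A3 := by
      apply Real.log_nonneg
      have : 0 ≤ p / (c * (1 - p)) := by positivity
      linarith
    have hA1le : A1 ≤ (1 - p) / (c * p) := by
      have := Real.log_le_sub_one_of_pos (show (0:ℝ) < 1 + (1 - p) / (c * p) by positivity)
      rw [hA1]; linarith
    have hA3le : A3 ≤ p / (c * (1 - p)) := by
      have := Real.log_le_sub_one_of_pos (show (0:ℝ) < 1 + p / (c * (1 - p)) by positivity)
      rw [hA3]; linarith
    have ht1 : p ^ 2 * A1 ≤ 1 := by
      calc p ^ 2 * A1 ≤ p ^ 2 * ((1 - p) / (c * p)) :=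
            mul_le_mul_of_nonneg_left hA1le (by positivity)
        _ = p * (1 - p) / c := by field_simp
        _ ≤ 1 := by rw [div_le_one hcp]; nlinarith
    have ht3 : (1 - p) ^ 2 * A3 ≤ 1 := by
      calc (1 - p) ^ 2 * A3 ≤ (1 - p) ^ 2 * (p / (c * (1 - p))) :=
            mul_le_mul_of_nonneg_left hA3le (by positivity)
        _ = p * (1 - p) / c := by field_simp
        _ ≤ 1 := by rw [div_le_one hcp]; nlinarith
    have ht1nn : 0 ≤ p ^ 2 * A1 := mul_nonneg (by positivity) hA1nn
    have ht3nn : 0 ≤ (1 - p) ^ 2 * A3 := mul_nonneg (by positivity) hA3nn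
    have hA2L : |A2| = L := hL.symm
    have ht2 : |2 * p * (1 - p) * A2| ≤ 2 * L := by
      rw [show 2 * p * (1 - p) * A2 = (2 * p * (1 - p)) * A2 by ring, abs_mul,
        abs_of_pos (show (0:ℝ) < 2 * p * (1 - p) by positivity), hA2L]
      nlinarith
    have ht2' := abs_le.mp ht2
    have hbr : |p ^ 2 * A1 + 2 * p * (1 - p) * A2 + (1 - p) ^ 2 * A3| ≤ 2 + 2 * L := by
      rw [abs_le]
      constructor <;> [linarith [ht2'.1]; linarith [ht2'.2]]
    have hrp : p ^ (-(1/2) : ℝ) = (Real.sqrt p)⁻¹ := by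
      rw [show (-(1/2) : ℝ) = -(1/2 : ℝ) from rfl, Real.rpow_neg hp0.le, Real.sqrt_eq_rpow]
    have hr1p : (1 - p) ^ (-(1/2) : ℝ) = (Real.sqrt (1 - p))⁻¹ := by
      rw [show (-(1/2) : ℝ) = -(1/2 : ℝ) from rfl, Real.rpow_neg h1p.le, Real.sqrt_eq_rpow]
    have hmulsq : Real.sqrt (p * (1 - p)) = Real.sqrt p * Real.sqrt (1 - p) :=
      Real.sqrt_mul hp0.le _
    have key : (Real.sqrt (p * (1 - p)))⁻¹
        ≤ Real.sqrt 2 * ((Real.sqrt p)⁻¹ + (Real.sqrt (1 - p))⁻¹) := by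
      rw [hmulsq, mul_inv]
      rcases le_total p (1/2) with h | h
      · have h12 : (1:ℝ) ≤ Real.sqrt 2 * Real.sqrt (1 - p) := by
          have h' : Real.sqrt 1 ≤ Real.sqrt (2 * (1 - p)) := Real.sqrt_le_sqrt (by linarith)
          rwa [Real.sqrt_one, Real.sqrt_mul (by norm_num : (0:ℝ) ≤ 2)] at h'
        have hble : (Real.sqrt (1 - p))⁻¹ ≤ Real.sqrt 2 := by
          rw [inv_eq_one_div, div_le_iff₀ hs1p]
          linarith
        have h1 : (Real.sqrt p)⁻¹ * (Real.sqrt (1 - p))⁻¹ ≤ (Real.sqrt p)⁻¹ * Real.sqrt 2 :=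
          mul_le_mul_of_nonneg_left hble (by positivity)
        have h2 : 0 ≤ Real.sqrt 2 * (Real.sqrt (1 - p))⁻¹ := by positivity
        nlinarith [h1, h2]
      · have h12 : (1:ℝ) ≤ Real.sqrt 2 * Real.sqrt p := by
          have h' : Real.sqrt 1 ≤ Real.sqrt (2 * p) := Real.sqrt_le_sqrt (by linarith)
          rwa [Real.sqrt_one, Real.sqrt_mul (by norm_num : (0:ℝ) ≤ 2)] at h'
        have hble : (Real.sqrt p)⁻¹ ≤ Real.sqrt 2 := by
          rw [inv_eq_one_div, div_le_iff₀ hsp]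
          linarith
        have h1 : (Real.sqrt (1 - p))⁻¹ * (Real.sqrt p)⁻¹ ≤ (Real.sqrt (1 - p))⁻¹ * Real.sqrt 2 :=
          mul_le_mul_of_nonneg_left hble (by positivity)
        have h2 : 0 ≤ Real.sqrt 2 * (Real.sqrt p)⁻¹ := by positivity
        nlinarith [h1, h2]
    have hfrac : (0:ℝ) < 1 / (Real.pi * Real.sqrt (p * (1 - p))) :=
      div_pos one_pos (mul_pos hπ hspos)
    have hF0 : F0aux c p = (1 / (Real.pi * Real.sqrt (p * (1 - p)))) *
        (p ^ 2 * A1 + 2 * p * (1 - p) * A2 + (1 - p) ^ 2 * A3) := by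
      rw [hA1, hA2, hA3]; rfl
    calc ‖F0aux c p‖
        = (1 / (Real.pi * Real.sqrt (p * (1 - p)))) *
            |p ^ 2 * A1 + 2 * p * (1 - p) * A2 + (1 - p) ^ 2 * A3| := by
          rw [hF0, Real.norm_eq_abs, abs_mul, abs_of_pos hfrac]
      _ ≤ (1 / (Real.pi * Real.sqrt (p * (1 - p)))) * (2 + 2 * L) :=
          mul_le_mul_of_nonneg_left hbr (by positivity)
      _ = C * (Real.sqrt (p * (1 - p)))⁻¹ := by
          rw [hC, one_div, mul_inv, div_eq_mul_inv]
          ring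
      _ ≤ C * (Real.sqrt 2 * ((Real.sqrt p)⁻¹ + (Real.sqrt (1 - p))⁻¹)) :=
          mul_le_mul_of_nonneg_left key hCnn
      _ = C * Real.sqrt 2 * (p ^ (-(1/2) : ℝ) + (1 - p) ^ (-(1/2) : ℝ)) := by
          rw [hrp, hr1p]; ring

/-- The difference between the expected guilty and innocent per-segment interleaving
log-likelihood scores equals a single integral:
`μ₁(c) − μ₀(c) = (1/(π·c)) · ∫₀¹ √(p(1−p)) · ln(1 + c/((c−1)²·p·(1−p))) dp`. -/
theorem mu1_sub_mu0 (c : ℝ) (hc : 1 < c) :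
    mu1 c - mu0 c = (1 / (Real.pi * c)) *
      ∫ p in (0:ℝ)..1, Real.sqrt (p * (1 - p)) *
        Real.log (1 + c / ((c - 1) ^ 2 * p * (1 - p))) := by
  have hf0 := F0aux_integrable c hc
  have hg := Gaux_integrable c hc
  have hg' : IntervalIntegrable (fun p => (1 / (Real.pi * c)) * Gaux c p)
      MeasureTheory.volume 0 1 := hg.const_mul _
  have h1 : mu1 c = ∫ p in (0:ℝ)..1, (F0aux c p + (1 / (Real.pi * c)) * Gaux c p) := by
    rw [show mu1 c = ∫ p in (0:ℝ)..1, F1aux c p from rfl]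
    exact intervalIntegral.integral_congr (F1_eq_F0_add c hc)
  have h2 : (∫ p in (0:ℝ)..1, (F0aux c p + (1 / (Real.pi * c)) * Gaux c p))
      = (∫ p in (0:ℝ)..1, F0aux c p) + ∫ p in (0:ℝ)..1, (1 / (Real.pi * c)) * Gaux c p :=
    intervalIntegral.integral_add hf0 hg'
  have h3 : (∫ p in (0:ℝ)..1, (1 / (Real.pi * c)) * Gaux c p)
      = (1 / (Real.pi * c)) * ∫ p in (0:ℝ)..1, Gaux c p :=
    intervalIntegral.integral_const_mul _ _
  have h4 : mu0 c = ∫ p in (0:ℝ)..1, F0aux c p := rfl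
  rw [h1, h2, h3, h4]
  simp only [Gaux]
  ring
end

section
/- The integral I(c) = ∫₀¹ √(p(1−p)) · ln(1 + c/((c−1)²·p·(1−p))) dp satisfies lim_{c→∞} c·I(c) = π. -/
/-!
With `q = p(1-p)` and `a = c/(c-1)²`, the integrand of `c·I(c)` is `c·√q·log(1 + a/q)`.
Since `a → 0` and `c·a → 1`, it tends pointwise to `1/√q`, and `log(1+x) ≤ x` dominates it by
`(c/(c-1))²/√q ≤ 4/√q`, which is integrable on `[0,1]`. Dominated convergence therefore gives
`c·I(c) → ∫₀¹ dp/√(p(1-p)) = π`, an antiderivative of the last integrand being `arcsin(2p-1)`.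
-/

open Filter MeasureTheory intervalIntegral

/-- The integral `I(c) = ∫₀¹ √(p(1−p)) · ln(1 + c/((c−1)²·p·(1−p))) dp`, which equals
`π·c·(μ₁(c) − μ₀(c))` for the interleaving log-likelihood scores. -/
noncomputable def Iint (c : ℝ) : ℝ :=
  ∫ p in (0:ℝ)..1, Real.sqrt (p * (1 - p)) *
    Real.log (1 + c / ((c - 1) ^ 2 * p * (1 - p)))

open Real Set Topology

lemma hasDerivAt_arcsin_two_mul_sub_one {x : ℝ} (h0 : 0 < x) (h1 : x < 1) :
    HasDerivAt (fun p => arcsin (2 * p - 1)) (1 / √(x * (1 - x))) x := by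
  have hq : 0 < x * (1 - x) := by nlinarith
  refine ((hasDerivAt_arcsin (x := 2 * x - 1) (by linarith) (by linarith)).comp x
    (((hasDerivAt_id x).const_mul 2).sub_const 1)).congr_deriv ?_
  rw [show 1 - (2 * x - 1) ^ 2 = 2 ^ 2 * (x * (1 - x)) by ring, sqrt_mul (by norm_num),
    sqrt_sq (by norm_num)]
  field_simp

lemma intervalIntegrable_one_div_sqrt_mul_one_sub :
    IntervalIntegrable (fun p => 1 / √(p * (1 - p))) volume 0 1 :=
  intervalIntegrable_deriv_of_nonneg (g := fun p => arcsin (2 * p - 1)) (by fun_prop)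
    (fun _ hx => hasDerivAt_arcsin_two_mul_sub_one (by simpa using hx.1) (by simpa using hx.2))
    (fun _ _ => by positivity)

lemma integral_one_div_sqrt_mul_one_sub : ∫ p in (0:ℝ)..1, 1 / √(p * (1 - p)) = π := by
  rw [integral_eq_sub_of_hasDerivAt_of_le zero_le_one (by fun_prop)
    (fun _ hx => hasDerivAt_arcsin_two_mul_sub_one hx.1 hx.2)
    intervalIntegrable_one_div_sqrt_mul_one_sub]
  norm_num

lemma sqrt_mul_log_one_add_div_le {a q : ℝ} (ha : 0 ≤ a) (hq : 0 ≤ q) :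
    √q * log (1 + a / q) ≤ a / √q := by
  rcases hq.eq_or_lt with rfl | hq
  · simp
  calc √q * log (1 + a / q) ≤ √q * (a / q) := by
        gcongr
        linarith [log_le_sub_one_of_pos (by positivity : 0 < 1 + a / q)]
    _ = a / √q := by rw [mul_div_left_comm, sqrt_div_self', mul_one_div]

lemma tendsto_mul_log_one_add {ι : Type*} {l : Filter ι} {u x : ι → ℝ} {L : ℝ}
    (hx : Tendsto x l (𝓝[≠] 0)) (hux : Tendsto (fun i => u i * x i) l (𝓝 L)) :
    Tendsto (fun i => u i * log (1 + x i)) l (𝓝 L) := by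
  have hslope : Tendsto (fun t => t⁻¹ * log (1 + t)) (𝓝[≠] 0) (𝓝 1) := by
    simpa [add_comm] using (hasDerivAt_log one_ne_zero).tendsto_slope_zero
  have := hux.mul (hslope.comp hx)
  rw [mul_one] at this
  refine this.congr' ?_
  filter_upwards [hx self_mem_nhdsWithin] with i hi
  simp only [Function.comp_apply]
  field_simp [show x i ≠ 0 from hi]

lemma tendsto_inv_sub_one_atTop : Tendsto (fun c : ℝ => (c - 1)⁻¹) atTop (𝓝 0) :=
  tendsto_inv_atTop_zero.comp (tendsto_atTop_add_const_right _ (-1) tendsto_id)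

lemma tendsto_div_sub_one_atTop : Tendsto (fun c : ℝ => c / (c - 1)) atTop (𝓝 1) := by
  have h := tendsto_inv_sub_one_atTop.const_add 1
  rw [add_zero] at h
  refine h.congr' ?_
  filter_upwards [eventually_gt_atTop 1] with c hc
  have : c - 1 ≠ 0 := by linarith
  field_simp
  ring

lemma tendsto_mul_sqrt_mul_log_one_add_div {q : ℝ} (hq : 0 < q) :
    Tendsto (fun c => c * (√q * log (1 + c / (c - 1) ^ 2 / q))) atTop (𝓝 (1 / √q)) := by
  have hratio := tendsto_div_sub_one_atTop
  have hx : Tendsto (fun c : ℝ => c / (c - 1) ^ 2 / q) atTop (𝓝[≠] 0) := by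
    refine tendsto_nhdsWithin_iff.2 ⟨?_, ?_⟩
    · have := (hratio.mul tendsto_inv_sub_one_atTop).div_const q
      rw [mul_zero, zero_div] at this
      refine this.congr fun c => ?_
      rw [← div_eq_mul_inv, div_div c, ← sq]
    · filter_upwards [eventually_gt_atTop 1] with c hc
      have : c - 1 ≠ 0 := by linarith
      simp only [mem_compl_iff, mem_singleton_iff]
      positivity
  have hux : Tendsto (fun c : ℝ => c * √q * (c / (c - 1) ^ 2 / q)) atTop (𝓝 (1 / √q)) := by
    have := (hratio.pow 2).mul_const (√q / q)
    rw [one_pow, one_mul] at this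
    rw [← sqrt_div_self']
    refine this.congr fun c => ?_
    rw [div_pow]
    ring
  simpa only [mul_assoc] using tendsto_mul_log_one_add hx hux

lemma norm_mul_sqrt_mul_log_one_add_div_le {c q : ℝ} (hc : 2 ≤ c) (hq : 0 ≤ q) :
    ‖c * (√q * log (1 + c / (c - 1) ^ 2 / q))‖ ≤ 4 * (1 / √q) := by
  have ha : 0 ≤ c / (c - 1) ^ 2 := by positivity
  have hratio_nonneg : 0 ≤ c / (c - 1) := div_nonneg (by linarith) (by linarith)
  have hratio_le : c / (c - 1) ≤ 2 := by rw [div_le_iff₀ (by linarith)]; linarith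
  have hlog : 0 ≤ log (1 + c / (c - 1) ^ 2 / q) := log_nonneg (by simpa using by positivity)
  rw [norm_of_nonneg (by positivity)]
  calc c * (√q * log (1 + c / (c - 1) ^ 2 / q)) ≤ c * (c / (c - 1) ^ 2 / √q) := by
        gcongr
        exact sqrt_mul_log_one_add_div_le ha hq
    _ = (c / (c - 1)) ^ 2 * (1 / √q) := by rw [div_pow]; ring
    _ ≤ 2 ^ 2 * (1 / √q) := by gcongr
    _ = 4 * (1 / √q) := by norm_num

lemma Iint_eq_integral_log_one_add_div (c : ℝ) :
    Iint c = ∫ p in (0:ℝ)..1, √(p * (1 - p)) * log (1 + c / (c - 1) ^ 2 / (p * (1 - p))) := by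
  simp only [Iint, div_div, mul_assoc]

/-- The integral `I(c)` satisfies `I(c) ∼ π/c`, i.e. `c·I(c) → π` as `c → ∞`. -/
theorem Iint_asymptotics :
    Tendsto (fun c : ℝ => c * Iint c) atTop (nhds Real.pi) := by
  have hlim := tendsto_integral_filter_of_dominated_convergence (μ := volume) (a := 0) (b := 1)
    (F := fun c p => c * (√(p * (1 - p)) * log (1 + c / (c - 1) ^ 2 / (p * (1 - p)))))
    (fun p => 4 * (1 / √(p * (1 - p))))
    (Eventually.of_forall fun c => by fun_prop)
    (by
      filter_upwards [eventually_ge_atTop 2] with c hc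
      refine ae_of_all _ fun p hp => ?_
      rw [uIoc_of_le zero_le_one] at hp
      exact norm_mul_sqrt_mul_log_one_add_div_le hc (mul_nonneg hp.1.le (sub_nonneg.2 hp.2)))
    (intervalIntegrable_one_div_sqrt_mul_one_sub.const_mul 4)
    (by
      filter_upwards [Measure.ae_ne volume 1] with p hp1 hp
      rw [uIoc_of_le zero_le_one] at hp
      exact tendsto_mul_sqrt_mul_log_one_add_div
        (mul_pos hp.1 (sub_pos.2 (lt_of_le_of_ne hp.2 hp1))))
  rw [integral_one_div_sqrt_mul_one_sub] at hlim
  refine hlim.congr fun c => ?_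
  rw [Iint_eq_integral_log_one_add_div, intervalIntegral.integral_const_mul]
end

section
/- Fix an integer c ≥ 2 and p ∈ (0,1). Let X₁, …, X_c be i.i.d. Bernoulli(p) random variables, let J be uniformly distributed on {1, …, c} and independent of (X₁, …, X_c), and set Y = X_J (the interleaving attack). Let g_sym be the symmetric Tardos score function: g_sym(0,0,p) = √(p/(1−p)), g_sym(0,1,p) = −√(p/(1−p)), g_sym(1,0,p) = −√((1−p)/p), g_sym(1,1,p) = √((1−p)/p). Then the expected score of the colluder X₁ equals E[g_sym(X₁, Y, p)] = (2/c)·√(p(1−p)). -/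
/-!
Conditioning on the uniform index `J`, which is independent of the code symbols, the expected
score is `c⁻¹ ∑ⱼ E[g_sym(X₁, Xⱼ, p)]`. For `j ≠ 1` the symbols `X₁, Xⱼ` are independent, and
`g_sym` has mean zero in its first argument under Bernoulli(`p`):
`(1 - p) g_sym(0, y, p) + p g_sym(1, y, p) = 0` for each `y`. Only `j = 1` survives, where
`(1 - p) g_sym(0, 0, p) + p g_sym(1, 1, p) = 2 √(p (1 - p))`.
-/

open MeasureTheory ProbabilityTheory ENNReal

/-- The symmetric Tardos score function of Škorić et al. (with the bit `1` encoded as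
`true` and `0` as `false`): `g_sym(0,0,p) = √(p/(1−p))`, `g_sym(0,1,p) = −√(p/(1−p))`,
`g_sym(1,0,p) = −√((1−p)/p)`, `g_sym(1,1,p) = √((1−p)/p)`. -/
noncomputable def symScore (x y : Bool) (p : ℝ) : ℝ :=
  match x, y with
  | false, false => Real.sqrt (p / (1 - p))
  | false, true => -Real.sqrt (p / (1 - p))
  | true, false => -Real.sqrt ((1 - p) / p)
  | true, true => Real.sqrt ((1 - p) / p)

section Mixture

variable {Ω β ι : Type*} [MeasurableSpace Ω] {P : Measure Ω}

theorem integral_comp_eq_sum_measureReal_mul_integral [MeasurableSpace β] [Fintype ι]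
    [MeasurableSpace ι] [MeasurableSingletonClass ι] {V : Ω → β} {J : Ω → ι}
    (hV : Measurable V) (hJ : Measurable J) (hVJ : IndepFun V J P) {G : β → ι → ℝ}
    (hG : ∀ i, Measurable fun v => G v i) (hGint : ∀ i, Integrable (fun ω => G (V ω) i) P) :
    ∫ ω, G (V ω) (J ω) ∂P = ∑ i, P.real {ω | J ω = i} * ∫ ω, G (V ω) i ∂P := by
  have hsplit : (fun ω => G (V ω) (J ω))
      = fun ω => ∑ i, ({i} : Set ι).indicator 1 (J ω) * G (V ω) i := by
    funext ω
    rw [Finset.sum_eq_single (J ω) (fun i _ hi => by simp [Ne.symm hi]) (by simp)]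
    simp
  have hterm (i : ι) : ∫ ω, ({i} : Set ι).indicator 1 (J ω) * G (V ω) i ∂P
      = P.real {ω | J ω = i} * ∫ ω, G (V ω) i ∂P := by
    rw [hVJ.symm.integral_fun_comp_mul_comp hJ.aemeasurable hV.aemeasurable
      Measurable.of_discrete.aestronglyMeasurable (hG i).aestronglyMeasurable]
    congr 1
    exact integral_indicator_one (hJ (measurableSet_singleton i))
  rw [hsplit, integral_finsetSum _ fun i _ => ?_]
  · exact Finset.sum_congr rfl fun i _ => hterm i
  · have hind : Measurable (({i} : Set ι).indicator (1 : ι → ℝ)) :=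
      measurable_const.indicator (measurableSet_singleton i)
    refine (hGint i).bdd_mul (c := 1) (hind.comp hJ).aestronglyMeasurable (.of_forall fun ω => ?_)
    exact (norm_indicator_le_norm_self _ _).trans (by simp)

theorem integral_comp_eq_sum_measureReal_mul [IsFiniteMeasure P] [Fintype ι] [MeasurableSpace ι]
    [MeasurableSingletonClass ι] {U : Ω → ι} (hU : Measurable U) (f : ι → ℝ) :
    ∫ ω, f (U ω) ∂P = ∑ i, P.real {ω | U ω = i} * f i := by
  rw [← integral_map hU.aemeasurable Measurable.of_discrete.aestronglyMeasurable,
    integral_fintype Integrable.of_finite]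
  simp [map_measureReal_apply hU (measurableSet_singleton _), Set.preimage, smul_eq_mul]

theorem integral_comp_bool_of_measure_eq_true [IsProbabilityMeasure P] {U : Ω → Bool}
    (hU : Measurable U) {p : ℝ} (hp : 0 ≤ p) (hUp : P {ω | U ω = true} = ENNReal.ofReal p)
    (f : Bool → ℝ) :
    ∫ ω, f (U ω) ∂P = (1 - p) * f false + p * f true := by
  have htrue : P.real {ω | U ω = true} = p := by rw [measureReal_def, hUp, toReal_ofReal hp]
  have hfalse : P.real {ω | U ω = false} = 1 - p := by
    have hcompl : {ω | U ω = false} = {ω | U ω = true}ᶜ := by ext ω; simp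
    rw [hcompl, probReal_compl_eq_one_sub (s := {ω | U ω = true})
      (hU (measurableSet_singleton true)), htrue]
  rw [integral_comp_eq_sum_measureReal_mul hU, Fintype.sum_bool, htrue, hfalse, add_comm]

end Mixture

theorem mul_sqrt_div_self {x : ℝ} (hx : 0 ≤ x) (y : ℝ) : x * √(y / x) = √(x * y) := by
  rcases hx.eq_or_lt with rfl | hx0
  · simp
  · have hsx : √x ≠ 0 := (Real.sqrt_pos.2 hx0).ne'
    rw [Real.sqrt_div' y hx, Real.sqrt_mul hx]
    nth_rewrite 1 [← Real.mul_self_sqrt hx]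
    field_simp

section SymScore

variable {p : ℝ}

theorem symScore_mean_fst_eq_zero (hp0 : 0 ≤ p) (hp1 : p ≤ 1) (y : Bool) :
    (1 - p) * symScore false y p + p * symScore true y p = 0 := by
  cases y <;>
    simp only [symScore, mul_neg, mul_sqrt_div_self hp0, mul_sqrt_div_self (sub_nonneg.2 hp1),
      mul_comm (1 - p) p] <;> ring

theorem symScore_mean_diag (hp0 : 0 ≤ p) (hp1 : p ≤ 1) :
    (1 - p) * symScore false false p + p * symScore true true p = 2 * √(p * (1 - p)) := by
  simp only [symScore, mul_sqrt_div_self hp0, mul_sqrt_div_self (sub_nonneg.2 hp1),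
    mul_comm (1 - p) p]
  ring

variable {Ω : Type*} [MeasurableSpace Ω] {P : Measure Ω} [IsProbabilityMeasure P]
  {U W : Ω → Bool}

theorem integral_symScore_self (hU : Measurable U) (hp0 : 0 ≤ p) (hp1 : p ≤ 1)
    (hUp : P {ω | U ω = true} = ENNReal.ofReal p) :
    ∫ ω, symScore (U ω) (U ω) p ∂P = 2 * √(p * (1 - p)) := by
  rw [integral_comp_bool_of_measure_eq_true (f := fun a => symScore a a p) hU hp0 hUp,
    symScore_mean_diag hp0 hp1]

theorem integral_symScore_of_indepFun (hU : Measurable U) (hW : Measurable W)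
    (hUW : IndepFun U W P) (hp0 : 0 ≤ p) (hp1 : p ≤ 1)
    (hUp : P {ω | U ω = true} = ENNReal.ofReal p) :
    ∫ ω, symScore (U ω) (W ω) p ∂P = 0 := by
  rw [integral_comp_eq_sum_measureReal_mul_integral (G := fun a b => symScore a b p) hU hW hUW
    (fun _ => Measurable.of_discrete)
    (fun b => (Integrable.of_finite (f := fun a => symScore a b p)).comp_measurable hU)]
  refine Finset.sum_eq_zero fun b _ => ?_
  rw [integral_comp_bool_of_measure_eq_true (f := fun a => symScore a b p) hU hp0 hUp,
    symScore_mean_fst_eq_zero hp0 hp1, mul_zero]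

end SymScore

/-- **Expected symmetric score of a colluder under the interleaving attack.**
Let `X 0, …, X (c−1)` be i.i.d. Bernoulli(`p`), let `J` be uniform on `Fin c` and
independent of the vector `(X i)ᵢ`, and set `Y = X J` (the interleaving attack).  Then
the expected symmetric Tardos score of the colluder `X 0` is
`E[g_sym(X₁, Y, p)] = (2/c)·√(p(1−p))`. -/
theorem interleaving_symScore_colluder
    {Ω : Type*} [MeasurableSpace Ω] (P : Measure Ω) [IsProbabilityMeasure P]
    (c : ℕ) (hc : 2 ≤ c) (p : ℝ) (hp : p ∈ Set.Ioo (0 : ℝ) 1)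
    (X : Fin c → Ω → Bool) (J : Ω → Fin c)
    (hXmeas : ∀ i, Measurable (X i)) (hJmeas : Measurable J)
    (hXbern : ∀ i, P {ω | X i ω = true} = ENNReal.ofReal p)
    (hXindep : iIndepFun X P)
    (hJunif : ∀ j : Fin c, P {ω | J ω = j} = (c : ℝ≥0∞)⁻¹)
    (hXJindep : IndepFun (fun ω i => X i ω) J P) :
    ∫ ω, symScore (X ⟨0, by omega⟩ ω) (X (J ω) ω) p ∂P
      = (2 / c) * Real.sqrt (p * (1 - p)) := by
  set z : Fin c := ⟨0, by omega⟩
  have hp0 : 0 ≤ p := hp.1.le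
  have hp1 : p ≤ 1 := hp.2.le
  have hmean (j : Fin c) :
      ∫ ω, symScore (X z ω) (X j ω) p ∂P = if j = z then 2 * √(p * (1 - p)) else 0 := by
    split_ifs with hjz
    · subst hjz
      exact integral_symScore_self (hXmeas z) hp0 hp1 (hXbern z)
    · exact integral_symScore_of_indepFun (hXmeas z) (hXmeas j)
        (hXindep.indepFun (Ne.symm hjz)) hp0 hp1 (hXbern z)
  have hJreal (j : Fin c) : P.real {ω | J ω = j} = (c : ℝ)⁻¹ := by
    simp [measureReal_def, hJunif]
  have hV : Measurable fun ω i => X i ω := measurable_pi_lambda _ hXmeas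
  rw [integral_comp_eq_sum_measureReal_mul_integral (G := fun x j => symScore (x z) (x j) p)
    hV hJmeas hXJindep (fun _ => Measurable.of_discrete) fun j =>
      (Integrable.of_finite (f := fun x : Fin c → Bool => symScore (x z) (x j) p)).comp_measurable
        hV]
  simp only [hmean, hJreal, mul_ite, mul_zero, Finset.sum_ite_eq', Finset.mem_univ, if_true]
  ring
end
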